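/- arXiv:2509.20773 — 2 statements merged into one kernel-verified Lean document; each statement's English description precedes it below -/
import Mathlib

section
/- Let u and v be binary words with |u| = |v| = n, |u|_a = r1, |v|_a = r2 and r1 − r2 ≥ 2, and let w = v^R be the reversal of v. Then (u,v) is mutually abelian-unbordered if and only if both of the following hold: (a) for every t with 1 ≤ t ≤ n, the prefix of u of length t is not abelian equivalent to the prefix of w of length t; and (b) for every t with 0 ≤ t ≤ n−1, |u_t|_a − |w_t|_a ≠ r1 − r2, where u_t and w_t denote the prefixes of u and w of length t. -/
/-- Abelian equivalence of binary words; the alphabet `{a, b}` is encoded by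
`Bool` with `a = true` and `b = false`. -/
def AbEq (x y : List Bool) : Prop :=
  x.count true = y.count true ∧ x.count false = y.count false

/-- `(x, y)` is an internal abelian-border of `(u, v)`: `x` is a nonempty proper
suffix of `u`, `y` is a proper prefix of `v`, and `x ~ y`. -/
def IsIntBorder (u v x y : List Bool) : Prop :=
  x ≠ [] ∧ x ≠ u ∧ x <:+ u ∧ y <+: v ∧ y ≠ v ∧ AbEq x y

/-- `(x, y)` is an external abelian-border of `(u, v)`: `x` is a nonempty proper
prefix of `u`, `y` is a proper suffix of `v`, and `x ~ y`. -/
def IsExtBorder (u v x y : List Bool) : Prop :=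
  x ≠ [] ∧ x ≠ u ∧ x <+: u ∧ y <:+ v ∧ y ≠ v ∧ AbEq x y

/-- `(u, v)` has an internal abelian-border. -/
def HasIntB (u v : List Bool) : Prop := ∃ x y, IsIntBorder u v x y

/-- `(u, v)` has an external abelian-border. -/
def HasExtB (u v : List Bool) : Prop := ∃ x y, IsExtBorder u v x y

/-- `(u, v)` is mutually abelian-bordered. -/
def MAB (u v : List Bool) : Prop := HasIntB u v ∧ HasExtB u v

/-- `(u, v)` is mutually abelian-unbordered. -/
def MAU (u v : List Bool) : Prop := ¬ HasIntB u v ∧ ¬ HasExtB u v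

/-- `lsb u v` is the length of the shortest internal abelian-border of `(u, v)`:
the least `t` with `1 ≤ t ≤ |u| - 1` such that the suffix of `u` of length `t`
is abelian equivalent to the prefix of `v` of length `t`. -/
noncomputable def lsb (u v : List Bool) : ℕ :=
  sInf {t | 1 ≤ t ∧ t ≤ u.length - 1 ∧ AbEq (u.drop (u.length - t)) (v.take t)}

lemma count_tf (l : List Bool) : l.count true + l.count false = l.length := by
  induction l with
  | nil => simp
  | cons h t ih => cases h <;> simp [List.count_cons] <;> omega

lemma abeq_iff {x y : List Bool} :
    AbEq x y ↔ x.length = y.length ∧ x.count true = y.count true := by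
  have hx := count_tf x; have hy := count_tf y
  constructor
  · rintro ⟨h1, h2⟩; exact ⟨by omega, h1⟩
  · rintro ⟨h1, h2⟩; exact ⟨h2, by omega⟩

lemma count_take_rev (v : List Bool) (t : ℕ) (ht : t ≤ v.length) (c : Bool) :
    (v.reverse.take t).count c = (v.drop (v.length - t)).count c := by
  have h : v.reverse.take t = (v.drop (v.length - t)).reverse := by
    have h2 : v.reverse = (v.drop (v.length - t)).reverse ++ (v.take (v.length - t)).reverse := by
      rw [← List.reverse_append, List.take_append_drop]
    rw [h2]
    have hl : (v.drop (v.length - t)).reverse.length = t := by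
      simp [List.length_drop]; omega
    rw [List.take_left' hl]
  rw [h, List.count_reverse]

lemma count_take_drop (l : List Bool) (s : ℕ) (c : Bool) :
    (l.take s).count c + (l.drop s).count c = l.count c := by
  conv_rhs => rw [← List.take_append_drop s l]
  rw [List.count_append]

lemma hasIntB_iff {u v : List Bool} (h : u.length = v.length) :
    HasIntB u v ↔ ∃ t, 1 ≤ t ∧ t ≤ u.length - 1 ∧
      AbEq (u.drop (u.length - t)) (v.take t) := by
  constructor
  · rintro ⟨x, y, hx0, hxu, ⟨s, hs⟩, ⟨z, hz⟩, hyv, hab⟩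
    have hlen : x.length = y.length := (abeq_iff.mp hab).1
    refine ⟨x.length, List.length_pos_iff.mpr hx0, ?_, ?_⟩
    · have h1 : u.length = s.length + x.length := by rw [← hs]; simp
      have h2 : x.length ≠ u.length := by
        intro he
        have hs0 : s.length = 0 := by omega
        have : s = [] := List.length_eq_zero_iff.mp hs0
        exact hxu (by rw [← hs, this, List.nil_append])
      omega
    · have h1 : u.length = s.length + x.length := by rw [← hs]; simp
      have hd : u.drop (u.length - x.length) = x := by
        have e : u.length - x.length = s.length := by omega
        rw [e, ← hs, List.drop_left]
      have htk : v.take x.length = y := by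
        rw [hlen, ← hz, List.take_left]
      rw [hd, htk]; exact hab
  · rintro ⟨t, ht1, ht2, hab⟩
    have hld : (u.drop (u.length - t)).length = t := by
      simp [List.length_drop]; omega
    have hlt : (v.take t).length = t := by
      simp [List.length_take]; omega
    refine ⟨u.drop (u.length - t), v.take t, ?_, ?_, List.drop_suffix _ _,
      List.take_prefix _ _, ?_, hab⟩
    · apply List.ne_nil_of_length_pos; omega
    · intro he; rw [he] at hld; omega
    · intro he; rw [he] at hlt; omega

lemma hasExtB_iff {u v : List Bool} (h : u.length = v.length) :
    HasExtB u v ↔ ∃ t, 1 ≤ t ∧ t ≤ u.length - 1 ∧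
      AbEq (u.take t) (v.drop (v.length - t)) := by
  constructor
  · rintro ⟨x, y, hx0, hxu, ⟨z, hz⟩, ⟨s, hs⟩, hyv, hab⟩
    have hlen : x.length = y.length := (abeq_iff.mp hab).1
    refine ⟨x.length, List.length_pos_iff.mpr hx0, ?_, ?_⟩
    · have h1 : u.length = x.length + z.length := by rw [← hz]; simp
      have h2 : x.length ≠ u.length := by
        intro he
        have hz0 : z.length = 0 := by omega
        have : z = [] := List.length_eq_zero_iff.mp hz0
        exact hxu (by rw [← hz, this, List.append_nil])
      omega
    · have h1 : v.length = s.length + y.length := by rw [← hs]; simp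
      have htk : u.take x.length = x := by rw [← hz, List.take_left]
      have hd : v.drop (v.length - x.length) = y := by
        have e : v.length - x.length = s.length := by omega
        rw [e, ← hs, List.drop_left]
      rw [htk, hd]; exact hab
  · rintro ⟨t, ht1, ht2, hab⟩
    have hld : (v.drop (v.length - t)).length = t := by
      simp [List.length_drop]; omega
    have hlt : (u.take t).length = t := by
      simp [List.length_take]; omega
    refine ⟨u.take t, v.drop (v.length - t), ?_, ?_, List.take_prefix _ _,
      List.drop_suffix _ _, ?_, hab⟩
    · apply List.ne_nil_of_length_pos; omega
    · intro he; rw [he] at hlt; omega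
    · intro he; rw [he] at hld; omega
theorem stmt_14 (n r1 r2 : ℕ) (u v : List Bool)
    (hu : u.length = n) (hv : v.length = n)
    (hr1 : u.count true = r1) (hr2 : v.count true = r2) (hr : r2 + 2 ≤ r1) :
    MAU u v ↔
      ((∀ t, 1 ≤ t → t ≤ n → ¬ AbEq (u.take t) (v.reverse.take t)) ∧
       (∀ t, t ≤ n - 1 →
          ((u.take t).count true : ℤ) - ((v.reverse.take t).count true : ℤ)
            ≠ (r1 : ℤ) - (r2 : ℤ))) := by
  have hcl : u.count true ≤ u.length := List.count_le_length
  have hn2 : 2 ≤ n := by omega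
  have hw : v.reverse.length = n := by simp [hv]
  have hct : ∀ t, t ≤ n → ∀ c, (v.reverse.take t).count c = (v.drop (n - t)).count c := by
    intro t ht c
    have h := count_take_rev v t (by omega) c
    rw [hv] at h; exact h
  have hlen : u.length = v.length := by omega
  unfold MAU
  rw [hasIntB_iff hlen, hasExtB_iff hlen, hu, hv]
  constructor
  · rintro ⟨hI, hE⟩
    constructor
    · intro t ht1 htn hab
      by_cases hcase : t = n
      · subst hcase
        have h1 : u.take t = u := by rw [← hu]; simp
        have h2 : v.reverse.take t = v.reverse := by rw [← hw]; simp
        rw [h1, h2] at hab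
        have hc := hab.1
        rw [List.count_reverse] at hc
        omega
      · exact hE ⟨t, ht1, by omega, by
          rw [abeq_iff]
          have hl1 : (u.take t).length = t := by simp [List.length_take]; omega
          have hl2 : (v.drop (n - t)).length = t := by
            simp [List.length_drop]; omega
          have hc := (abeq_iff.mp hab).2
          rw [hct t (by omega) true] at hc
          exact ⟨by omega, hc⟩⟩
    · intro t htn heq
      have ht0 : 1 ≤ t := by
        rcases Nat.eq_zero_or_pos t with h | h
        · subst h; simp at heq; omega
        · exact h
      apply hI
      refine ⟨n - t, by omega, by omega, ?_⟩
      rw [show n - (n - t) = t from by omega, abeq_iff]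
      have hl1 : (u.drop t).length = n - t := by simp [List.length_drop]; omega
      have hl2 : (v.take (n - t)).length = n - t := by simp [List.length_take]; omega
      refine ⟨by omega, ?_⟩
      have c1 := count_take_drop u t true
      have c2 := count_take_drop v (n - t) true
      have c3 := hct t (by omega) true
      rw [hr1] at c1; rw [hr2] at c2
      omega
  · rintro ⟨ha, hb⟩
    constructor
    · rintro ⟨t', ht1, ht2, hab⟩
      apply hb (n - t') (by omega)
      rw [abeq_iff] at hab
      have c1 := count_take_drop u (n - t') true
      have c2 := count_take_drop v t' true
      have c3 := hct (n - t') (by omega) true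
      rw [show n - (n - t') = t' from by omega] at c3
      rw [hr1] at c1; rw [hr2] at c2
      have h2 := hab.2
      omega
    · rintro ⟨t, ht1, ht2, hab⟩
      apply ha t ht1 (by omega)
      rw [abeq_iff] at hab ⊢
      have hl1 : (u.take t).length = t := by simp [List.length_take]; omega
      have hl2 : (v.drop (n - t)).length = t := by simp [List.length_drop]; omega
      have hl3 : (v.reverse.take t).length = t := by simp [List.length_take]; omega
      have c3 := hct t (by omega) true
      exact ⟨by omega, by rw [c3]; exact hab.2⟩
end

section
/- Let (u,v) be a pair of binary words of the same length that has an internal abelian-border, and let (x,y) be a shortest internal abelian-border of (u,v): x is a nonempty proper suffix of u, y is the prefix of v with |y| = |x|, x ~ y, and no internal abelian-border of (u,v) has length smaller than |x|. Then the pair (x,y) is mutually abelian-unbordered. -/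
lemma abeq_length {x y : List Bool} (h : AbEq x y) : x.length = y.length := by
  have hx := count_tf x
  have hy := count_tf y
  obtain ⟨h1, h2⟩ := h
  omega

theorem stmt_17 (u v x y : List Bool) (hlen : u.length = v.length)
    (hx : x ≠ []) (hxu : x <:+ u) (hxne : x ≠ u)
    (hy : y = v.take x.length) (hxy : AbEq x y)
    (hmin : ∀ x' y', IsIntBorder u v x' y' → x.length ≤ x'.length) :
    MAU x y := by
  have hxlt : x.length < u.length := by
    rcases lt_or_eq_of_le hxu.length_le with h | h
    · exact h
    · exact absurd (hxu.eq_of_length h) hxne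
  have hyv : y <+: v := hy ▸ List.take_prefix _ _
  have hylen : y.length = x.length := (abeq_length hxy).symm
  constructor
  · rintro ⟨x', y', hne, hnex, hsuf, hpre, hney, hab⟩
    have hlt : x'.length < x.length := by
      have := abeq_length hab
      have h2 : y'.length < y.length := by
        rcases lt_or_eq_of_le hpre.length_le with h | h
        · exact h
        · exact absurd (hpre.eq_of_length h) hney
      omega
    have : IsIntBorder u v x' y' := by
      refine ⟨hne, ?_, hsuf.trans hxu, hpre.trans hyv, ?_, hab⟩
      · intro h; subst h; omega
      · intro h; subst h
        have := hyv.length_le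
        have := abeq_length hab
        omega
    have := hmin x' y' this
    omega
  · rintro ⟨x', y', hne, hnex, hpre, hsuf, hney, hab⟩
    obtain ⟨z, hz⟩ := hpre
    obtain ⟨w, hw⟩ := hsuf
    have hx'len : 0 < x'.length := List.length_pos_iff.mpr hne
    have hzlen : z.length = x.length - x'.length := by
      have := congrArg List.length hz; simp at this; omega
    have hwlen : w.length = y.length - y'.length := by
      have := congrArg List.length hw; simp at this; omega
    have hzne : z ≠ [] := by
      intro h; subst h; simp at hz; exact hnex hz
    have habzw : AbEq z w := by
      obtain ⟨h1, h2⟩ := hab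
      obtain ⟨g1, g2⟩ := hxy
      constructor
      · have := congrArg (List.count true) hz
        have := congrArg (List.count true) hw
        simp [List.count_append] at *
        omega
      · have := congrArg (List.count false) hz
        have := congrArg (List.count false) hw
        simp [List.count_append] at *
        omega
    have hzlt : z.length < x.length := by
      have h1 := abeq_length hab
      have h2 := List.length_pos_iff.mpr hzne
      have h3 := congrArg List.length hz
      simp at h3
      omega
    have : IsIntBorder u v z w := by
      have hzx : z <:+ x := ⟨x', hz⟩
      have hwy : w <+: y := ⟨y', hw⟩
      refine ⟨hzne, ?_, hzx.trans hxu, hwy.trans hyv, ?_, habzw⟩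
      · intro h
        have := congrArg List.length h
        omega
      · intro h
        have := congrArg List.length h
        have := abeq_length hab
        omega
    have := hmin z w this
    have := abeq_length habzw
    omega
end
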